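/- arXiv:1708.08343 — 2 statements merged into one kernel-verified Lean document; each statement's English description precedes it below -/
import Mathlib

section
/- Let T, L, σ > 0, let U ⊆ ℝ be a nonempty compact set, let f, b : [0,T] × [0,L] × U → ℝ be continuous, and let g : [0,L] → ℝ and y, r : [0,T] → ℝ be continuous. Define the Hamiltonian H(t,x,p) = inf_{u ∈ U} [ f(t,x,u) + b(t,x,u) p ]. Suppose φ₁, φ₂ : [0,T] × [0,L] → ℝ are continuous, have continuous partial derivative in t and continuous first and second partial derivatives in x on [0,T] × [0,L], and each φ = φᵢ satisfies: −∂_t φ(t,x) − H(t, x, ∂_x φ(t,x)) − (1/2) σ² ∂²_x φ(t,x) = 0 for all (t,x) ∈ [0,T] × [0,L], together with the boundary conditions φ(T,x) = g(x) for x ∈ [0,L], ∂_x φ(t,0) = −y(t) and ∂_x φ(t,L) = r(t) for t ∈ [0,T]. Then φ₁ = φ₂ on [0,T] × [0,L]. -/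
/-!
The difference `w = φ₁ - φ₂` satisfies `∂ₜw ≥ -M |∂ₓw| - (σ²/2) ∂ₓₓw`, because the Hamiltonian is
`M`-Lipschitz in `p` for any bound `M` of `|b|`, together with homogeneous Neumann data and
`w(T, ·) = 0`. For `ε > 0` the function `w - ε (K (T - t) + (x - L/2)²)`, `K = M L + σ² + 1`, cannot
attain its maximum over the rectangle at a time `t < T`: at `x = 0` or `x = L` the slope `∓ε L` of
the barrier contradicts the Neumann condition, and at an interior point the first- and second-order
conditions contradict the differential inequality. Letting `ε → 0` gives `w ≤ 0`, and symmetry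
gives `φ₁ = φ₂`.
-/

open Set

/-- `φ` is a classical solution of the Hamilton–Jacobi–Bellman equation
`−∂ₜφ − H(t,x,∂ₓφ) − (1/2)σ²∂ₓₓφ = 0` on `[0,T] × [0,L]`, with Hamiltonian
`H(t,x,p) = inf_{u ∈ U} [f(t,x,u) + b(t,x,u) p]`, terminal condition
`φ(T,·) = g`, and Neumann boundary conditions `∂ₓφ(t,0) = −y(t)`,
`∂ₓφ(t,L) = r(t)`. The partial derivatives `∂ₜφ, ∂ₓφ, ∂ₓₓφ` (taken within
the domain) are required to exist and be continuous on `[0,T] × [0,L]`. -/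
def IsHJBSolution (T L σ : ℝ) (U : Set ℝ) (f b : ℝ → ℝ → ℝ → ℝ)
    (g y r : ℝ → ℝ) (φ : ℝ → ℝ → ℝ) : Prop :=
  ContinuousOn (fun q : ℝ × ℝ => φ q.1 q.2) (Set.Icc 0 T ×ˢ Set.Icc 0 L) ∧
  ∃ φt φx φxx : ℝ → ℝ → ℝ,
    ContinuousOn (fun q : ℝ × ℝ => φt q.1 q.2) (Set.Icc 0 T ×ˢ Set.Icc 0 L) ∧
    ContinuousOn (fun q : ℝ × ℝ => φx q.1 q.2) (Set.Icc 0 T ×ˢ Set.Icc 0 L) ∧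
    ContinuousOn (fun q : ℝ × ℝ => φxx q.1 q.2) (Set.Icc 0 T ×ˢ Set.Icc 0 L) ∧
    (∀ t ∈ Set.Icc (0 : ℝ) T, ∀ x ∈ Set.Icc (0 : ℝ) L,
      HasDerivWithinAt (fun s => φ s x) (φt t x) (Set.Icc 0 T) t ∧
      HasDerivWithinAt (fun z => φ t z) (φx t x) (Set.Icc 0 L) x ∧
      HasDerivWithinAt (fun z => φx t z) (φxx t x) (Set.Icc 0 L) x) ∧
    (∀ t ∈ Set.Icc (0 : ℝ) T, ∀ x ∈ Set.Icc (0 : ℝ) L,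
      -φt t x - (⨅ u : U, (f t x u + b t x u * φx t x))
        - (1 / 2) * σ ^ 2 * φxx t x = 0) ∧
    (∀ x ∈ Set.Icc (0 : ℝ) L, φ T x = g x) ∧
    (∀ t ∈ Set.Icc (0 : ℝ) T, φx t 0 = -(y t) ∧ φx t L = r t)

open Filter Topology

theorem IsMaxOn.hasDerivWithinAt_nonpos_of_mem_Ico {f : ℝ → ℝ} {f' a b x : ℝ}
    (h : IsMaxOn f (Icc a b) x) (hf : HasDerivWithinAt f f' (Icc a b) x) (hx : x ∈ Ico a b) :
    f' ≤ 0 := by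
  have hseg : segment ℝ x (x + (b - x)) ⊆ Icc a b := by
    rw [add_sub_cancel, segment_eq_Icc hx.2.le]
    exact Icc_subset_Icc_left hx.1
  have := h.localize.hasFDerivWithinAt_nonpos hf.hasFDerivWithinAt
    (mem_posTangentConeAt_of_segment_subset hseg)
  simp only [ContinuousLinearMap.toSpanSingleton_apply, smul_eq_mul] at this
  nlinarith [hx.2]

theorem IsMaxOn.hasDerivWithinAt_nonneg_of_mem_Ioc {f : ℝ → ℝ} {f' a b x : ℝ}
    (h : IsMaxOn f (Icc a b) x) (hf : HasDerivWithinAt f f' (Icc a b) x) (hx : x ∈ Ioc a b) :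
    0 ≤ f' := by
  have hseg : segment ℝ x (x + (a - x)) ⊆ Icc a b := by
    rw [add_sub_cancel, segment_symm, segment_eq_Icc hx.1.le]
    exact Icc_subset_Icc_right hx.2
  have := h.localize.hasFDerivWithinAt_nonpos hf.hasFDerivWithinAt
    (mem_posTangentConeAt_of_segment_subset hseg)
  simp only [ContinuousLinearMap.toSpanSingleton_apply, smul_eq_mul] at this
  nlinarith [hx.1]

theorem IsLocalMax.secondDeriv_nonpos {f f' : ℝ → ℝ} {f'' x : ℝ}
    (h : IsLocalMax f x) (hf : ∀ᶠ y in 𝓝 x, HasDerivAt f (f' y) y)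
    (hf' : HasDerivAt f' f'' x) : f'' ≤ 0 := by
  -- If `f'' > 0`, the second-derivative test makes `x` a local minimum too, so `f` is locally
  -- constant and `f'' = 0`.
  by_contra! hpos
  have hderiv : deriv f =ᶠ[𝓝 x] f' := hf.mono fun y hy => hy.deriv
  have hmin : IsLocalMin f x := by
    refine isLocalMin_of_deriv_deriv_pos ?_ ?_ hf.self_of_nhds.continuousAt
    · rwa [hderiv.deriv_eq, hf'.deriv]
    · rw [hderiv.eq_of_nhds]
      exact h.hasDerivAt_eq_zero hf.self_of_nhds
  have hconst : f =ᶠ[𝓝 x] fun _ => f x :=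
    (hmin.and h).mono fun y hy => le_antisymm hy.2 hy.1
  have : deriv f' x = 0 := by
    rw [← hderiv.deriv_eq, hconst.deriv.deriv_eq]
    simp
  exact hpos.ne' (hf'.deriv ▸ this)

theorem IsMaxOn.secondDeriv_nonpos_of_mem_Ioo {f f' : ℝ → ℝ} {f'' a b x : ℝ}
    (h : IsMaxOn f (Icc a b) x) (hf : ∀ y ∈ Icc a b, HasDerivWithinAt f (f' y) (Icc a b) y)
    (hf' : HasDerivWithinAt f' f'' (Icc a b) x) (hx : x ∈ Ioo a b) : f'' ≤ 0 := by
  refine (h.isLocalMax (Icc_mem_nhds hx.1 hx.2)).secondDeriv_nonpos ?_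
    (hf'.hasDerivAt (Icc_mem_nhds hx.1 hx.2))
  filter_upwards [Ioo_mem_nhds hx.1 hx.2] with y hy
  exact (hf y (Ioo_subset_Icc_self hy)).hasDerivAt (Icc_mem_nhds hy.1 hy.2)

theorem bddBelow_range_add_mul {ι : Type*} {c d : ι → ℝ} {M : ℝ} (hc : BddBelow (range c))
    (hd : ∀ i, |d i| ≤ M) (p : ℝ) : BddBelow (range fun i => c i + d i * p) := by
  obtain ⟨m, hm⟩ := hc
  refine ⟨m - M * |p|, ?_⟩
  rintro _ ⟨i, rfl⟩
  have hdp : |d i * p| ≤ M * |p| := by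
    rw [abs_mul]
    exact mul_le_mul_of_nonneg_right (hd i) (abs_nonneg p)
  linarith [hm ⟨i, rfl⟩, neg_abs_le (d i * p)]

theorem ciInf_add_mul_le_ciInf_add_mul_add {ι : Type*} {c d : ι → ℝ} {M : ℝ}
    (hc : BddBelow (range c)) (hd : ∀ i, |d i| ≤ M) (hM : 0 ≤ M) (p q : ℝ) :
    ⨅ i, (c i + d i * p) ≤ (⨅ i, (c i + d i * q)) + M * |p - q| := by
  cases isEmpty_or_nonempty ι
  · simp only [Real.iInf_of_isEmpty, zero_add]
    positivity
  rw [← sub_le_iff_le_add]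
  refine le_ciInf fun i => ?_
  have hdpq : d i * p - d i * q ≤ M * |p - q| := calc
    d i * p - d i * q ≤ |d i| * |p - q| := by rw [← mul_sub, ← abs_mul]; exact le_abs_self _
    _ ≤ M * |p - q| := by gcongr; exact hd i
  linarith [ciInf_le (bddBelow_range_add_mul hc hd p) i]

def HasPartialDerivs (T L : ℝ) (w wt wx wxx : ℝ → ℝ → ℝ) : Prop :=
  ∀ t ∈ Icc 0 T, ∀ x ∈ Icc 0 L,
    HasDerivWithinAt (fun s => w s x) (wt t x) (Icc 0 T) t ∧
    HasDerivWithinAt (fun z => w t z) (wx t x) (Icc 0 L) x ∧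
    HasDerivWithinAt (fun z => wx t z) (wxx t x) (Icc 0 L) x

section NeumannMaximumPrinciple

variable {T L M a : ℝ} {w wt wx wxx : ℝ → ℝ → ℝ}

theorem HasPartialDerivs.sub {v vt vx vxx : ℝ → ℝ → ℝ} (hw : HasPartialDerivs T L w wt wx wxx)
    (hv : HasPartialDerivs T L v vt vx vxx) :
    HasPartialDerivs T L (fun t x => w t x - v t x) (fun t x => wt t x - vt t x)
      (fun t x => wx t x - vx t x) (fun t x => wxx t x - vxx t x) := fun t ht x hx =>
  ⟨(hw t ht x hx).1.sub (hv t ht x hx).1, (hw t ht x hx).2.1.sub (hv t ht x hx).2.1,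
    (hw t ht x hx).2.2.sub (hv t ht x hx).2.2⟩

theorem hasPartialDerivs_barrier (T L K ε : ℝ) :
    HasPartialDerivs T L (fun t x => ε * (K * (T - t) + (x - L / 2) ^ 2))
      (fun _ _ => -(ε * K)) (fun _ x => ε * (2 * (x - L / 2))) (fun _ _ => ε * 2) := by
  intro t _ x _
  refine ⟨HasDerivAt.hasDerivWithinAt ?_, HasDerivAt.hasDerivWithinAt ?_,
    HasDerivAt.hasDerivWithinAt ?_⟩
  · simpa using ((((hasDerivAt_id t).const_sub T).const_mul K).add_const _).const_mul ε
  · simpa using ((((hasDerivAt_id x).sub_const (L / 2)).pow 2).const_add _).const_mul ε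
  · simpa using (((hasDerivAt_id x).sub_const (L / 2)).const_mul 2).const_mul ε

theorem not_isMaxOn_sub_of_strictSupersolution (hL : 0 < L) (ha : 0 ≤ a)
    (hw : HasPartialDerivs T L w wt wx wxx)
    (hsub : ∀ t ∈ Icc 0 T, ∀ x ∈ Icc 0 L, -(M * |wx t x|) - a * wxx t x ≤ wt t x)
    (hneumann : ∀ t ∈ Icc 0 T, wx t 0 = 0 ∧ wx t L = 0)
    {ψ ψt ψx ψxx : ℝ → ℝ → ℝ} (hψ : HasPartialDerivs T L ψ ψt ψx ψxx)
    (hψsuper : ∀ t ∈ Icc 0 T, ∀ x ∈ Icc 0 L, ψt t x + M * |ψx t x| + a * ψxx t x < 0)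
    (hψneumann : ∀ t ∈ Icc 0 T, ψx t 0 < 0 ∧ 0 < ψx t L)
    {t₀ x₀ : ℝ} (ht₀ : t₀ ∈ Ico 0 T) (hx₀ : x₀ ∈ Icc 0 L) :
    ¬ IsMaxOn (fun q : ℝ × ℝ => w q.1 q.2 - ψ q.1 q.2) (Icc 0 T ×ˢ Icc 0 L) (t₀, x₀) := by
  intro hmax
  have ht₀' : t₀ ∈ Icc 0 T := Ico_subset_Icc_self ht₀
  have hZ := hw.sub hψ
  have hmaxT : IsMaxOn (fun s => w s x₀ - ψ s x₀) (Icc 0 T) t₀ :=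
    hmax.comp_mapsTo (g := fun s => (s, x₀)) (fun s hs => ⟨hs, hx₀⟩) rfl
  have hmaxX : IsMaxOn (fun z => w t₀ z - ψ t₀ z) (Icc 0 L) x₀ :=
    hmax.comp_mapsTo (g := fun z => (t₀, z)) (fun z hz => ⟨ht₀', hz⟩) rfl
  have hZx : ∀ z ∈ Icc 0 L, HasDerivWithinAt (fun z => w t₀ z - ψ t₀ z)
      (wx t₀ z - ψx t₀ z) (Icc 0 L) z := fun z hz => (hZ t₀ ht₀' z hz).2.1
  have htime : wt t₀ x₀ - ψt t₀ x₀ ≤ 0 :=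
    hmaxT.hasDerivWithinAt_nonpos_of_mem_Ico (hZ t₀ ht₀' x₀ hx₀).1 ht₀
  obtain ⟨hn0, hnL⟩ := hneumann t₀ ht₀'
  obtain ⟨hψ0, hψL⟩ := hψneumann t₀ ht₀'
  rcases hx₀.1.eq_or_lt with rfl | h0
  · have hslope := hmaxX.hasDerivWithinAt_nonpos_of_mem_Ico (hZx 0 hx₀) ⟨le_rfl, hL⟩
    linarith
  rcases hx₀.2.eq_or_lt with rfl | hxL
  · have hslope := hmaxX.hasDerivWithinAt_nonneg_of_mem_Ioc (hZx x₀ hx₀) ⟨h0, le_rfl⟩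
    linarith
  have hgrad : wx t₀ x₀ = ψx t₀ x₀ := by
    have h₁ := hmaxX.hasDerivWithinAt_nonpos_of_mem_Ico (hZx x₀ hx₀) ⟨h0.le, hxL⟩
    have h₂ := hmaxX.hasDerivWithinAt_nonneg_of_mem_Ioc (hZx x₀ hx₀) ⟨h0, hxL.le⟩
    linarith
  have hhess : wxx t₀ x₀ - ψxx t₀ x₀ ≤ 0 :=
    hmaxX.secondDeriv_nonpos_of_mem_Ioo hZx (hZ t₀ ht₀' x₀ hx₀).2.2 ⟨h0, hxL⟩
  have hineq := hsub t₀ ht₀' x₀ hx₀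
  rw [hgrad] at hineq
  nlinarith [hψsuper t₀ ht₀' x₀ hx₀, mul_le_mul_of_nonneg_left (sub_nonpos.1 hhess) ha]

theorem neumann_le_mul_barrier (hL : 0 < L) (hM : 0 ≤ M) (ha : 0 ≤ a) {ε : ℝ} (hε : 0 < ε)
    (hwc : ContinuousOn (fun q : ℝ × ℝ => w q.1 q.2) (Icc 0 T ×ˢ Icc 0 L))
    (hw : HasPartialDerivs T L w wt wx wxx)
    (hsub : ∀ t ∈ Icc 0 T, ∀ x ∈ Icc 0 L, -(M * |wx t x|) - a * wxx t x ≤ wt t x)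
    (hneumann : ∀ t ∈ Icc 0 T, wx t 0 = 0 ∧ wx t L = 0)
    (hterminal : ∀ x ∈ Icc 0 L, w T x ≤ 0) :
    ∀ t ∈ Icc 0 T, ∀ x ∈ Icc 0 L,
      w t x ≤ ε * ((M * L + 2 * a + 1) * (T - t) + (x - L / 2) ^ 2) := by
  intro t ht x hx
  set Z : ℝ × ℝ → ℝ :=
    fun q => w q.1 q.2 - ε * ((M * L + 2 * a + 1) * (T - q.1) + (q.2 - L / 2) ^ 2) with hZ
  obtain ⟨⟨t₀, x₀⟩, ⟨ht₀, hx₀⟩, hmax⟩ := (isCompact_Icc.prod isCompact_Icc).exists_isMaxOn (f := Z)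
    ⟨(t, x), ht, hx⟩ (hwc.sub (Continuous.continuousOn (by fun_prop)))
  suffices hZ₀ : Z (t₀, x₀) ≤ 0 by
    have hle : Z (t, x) ≤ Z (t₀, x₀) := hmax (show (t, x) ∈ Icc 0 T ×ˢ Icc 0 L from ⟨ht, hx⟩)
    simp only [hZ] at hle hZ₀
    linarith
  rcases ht₀.2.eq_or_lt with rfl | hlt
  · simp only [hZ, sub_self, mul_zero, zero_add]
    nlinarith [hterminal x₀ hx₀, sq_nonneg (x₀ - L / 2)]
  refine absurd hmax (not_isMaxOn_sub_of_strictSupersolution hL ha hw hsub hneumann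
    (hasPartialDerivs_barrier T L _ ε) (fun t _ x hx => ?_) (fun t _ => ⟨?_, ?_⟩) ⟨ht₀.1, hlt⟩ hx₀)
  · have hslope : |ε * (2 * (x - L / 2))| ≤ ε * L := by
      rw [abs_le]
      constructor <;> nlinarith [hx.1, hx.2]
    nlinarith [mul_le_mul_of_nonneg_left hslope hM]
  · nlinarith
  · nlinarith

theorem neumann_maximumPrinciple (hL : 0 < L) (hM : 0 ≤ M) (ha : 0 ≤ a)
    (hwc : ContinuousOn (fun q : ℝ × ℝ => w q.1 q.2) (Icc 0 T ×ˢ Icc 0 L))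
    (hw : HasPartialDerivs T L w wt wx wxx)
    (hsub : ∀ t ∈ Icc 0 T, ∀ x ∈ Icc 0 L, -(M * |wx t x|) - a * wxx t x ≤ wt t x)
    (hneumann : ∀ t ∈ Icc 0 T, wx t 0 = 0 ∧ wx t L = 0)
    (hterminal : ∀ x ∈ Icc 0 L, w T x ≤ 0) :
    ∀ t ∈ Icc 0 T, ∀ x ∈ Icc 0 L, w t x ≤ 0 := by
  intro t ht x hx
  have hlim : Tendsto (fun ε => ε * ((M * L + 2 * a + 1) * (T - t) + (x - L / 2) ^ 2))
      (𝓝[>] 0) (𝓝 0) :=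
    ((continuous_mul_const _).tendsto' 0 0 (zero_mul _)).mono_left nhdsWithin_le_nhds
  refine ge_of_tendsto hlim ?_
  filter_upwards [self_mem_nhdsWithin] with ε hε
  exact neumann_le_mul_barrier hL hM ha hε hwc hw hsub hneumann hterminal t ht x hx

end NeumannMaximumPrinciple

theorem IsHJBSolution.le {T L σ : ℝ} {U : Set ℝ} {f b : ℝ → ℝ → ℝ → ℝ} {g y r : ℝ → ℝ}
    {φ₁ φ₂ : ℝ → ℝ → ℝ} (hL : 0 < L) (hUc : IsCompact U)
    (hf : ContinuousOn (fun q : ℝ × ℝ × ℝ => f q.1 q.2.1 q.2.2) (Icc 0 T ×ˢ Icc 0 L ×ˢ U))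
    (hb : ContinuousOn (fun q : ℝ × ℝ × ℝ => b q.1 q.2.1 q.2.2) (Icc 0 T ×ˢ Icc 0 L ×ˢ U))
    (h₁ : IsHJBSolution T L σ U f b g y r φ₁) (h₂ : IsHJBSolution T L σ U f b g y r φ₂) :
    ∀ t ∈ Icc 0 T, ∀ x ∈ Icc 0 L, φ₁ t x ≤ φ₂ t x := by
  obtain ⟨hc₁, φt₁, φx₁, φxx₁, -, -, -, hD₁, hP₁, hG₁, hB₁⟩ := h₁
  obtain ⟨hc₂, φt₂, φx₂, φxx₂, -, -, -, hD₂, hP₂, hG₂, hB₂⟩ := h₂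
  have hK : IsCompact (Icc 0 T ×ˢ Icc 0 L ×ˢ U) := isCompact_Icc.prod (isCompact_Icc.prod hUc)
  obtain ⟨C, hC⟩ := hK.exists_bound_of_continuousOn hb
  have hf_bdd : ∀ t ∈ Icc 0 T, ∀ x ∈ Icc 0 L, BddBelow (range fun u : U => f t x u) := by
    intro t ht x hx
    refine (hK.bddBelow_image hf).mono ?_
    rintro _ ⟨u, rfl⟩
    exact ⟨(t, x, u), ⟨ht, hx, u.2⟩, rfl⟩
  have hb_le : ∀ t ∈ Icc 0 T, ∀ x ∈ Icc 0 L, ∀ u : U, |b t x u| ≤ max C 0 :=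
    fun t ht x hx u => (hC (t, x, u) ⟨ht, hx, u.2⟩).trans (le_max_left C 0)
  have hsub : ∀ t ∈ Icc 0 T, ∀ x ∈ Icc 0 L,
      -(max C 0 * |φx₁ t x - φx₂ t x|) - 1 / 2 * σ ^ 2 * (φxx₁ t x - φxx₂ t x)
        ≤ φt₁ t x - φt₂ t x := fun t ht x hx => by
    linarith [hP₁ t ht x hx, hP₂ t ht x hx, ciInf_add_mul_le_ciInf_add_mul_add
      (hf_bdd t ht x hx) (hb_le t ht x hx) (le_max_right C 0) (φx₁ t x) (φx₂ t x)]
  intro t ht x hx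
  have hdiff := neumann_maximumPrinciple hL (le_max_right C 0) (by positivity) (hc₁.sub hc₂)
    (HasPartialDerivs.sub hD₁ hD₂) hsub
    (fun t ht => ⟨by rw [(hB₁ t ht).1, (hB₂ t ht).1, sub_self],
      by rw [(hB₁ t ht).2, (hB₂ t ht).2, sub_self]⟩)
    (fun x hx => by rw [hG₁ x hx, hG₂ x hx, sub_self]) t ht x hx
  exact sub_nonpos.1 hdiff

theorem hjb_uniqueness_general
    (T L σ : ℝ) (hL : 0 < L)
    (U : Set ℝ) (hUc : IsCompact U)
    (f b : ℝ → ℝ → ℝ → ℝ)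
    (hf : ContinuousOn (fun q : ℝ × ℝ × ℝ => f q.1 q.2.1 q.2.2)
      (Set.Icc 0 T ×ˢ Set.Icc 0 L ×ˢ U))
    (hb : ContinuousOn (fun q : ℝ × ℝ × ℝ => b q.1 q.2.1 q.2.2)
      (Set.Icc 0 T ×ˢ Set.Icc 0 L ×ˢ U))
    (g y r : ℝ → ℝ)
    (φ₁ φ₂ : ℝ → ℝ → ℝ)
    (h₁ : IsHJBSolution T L σ U f b g y r φ₁)
    (h₂ : IsHJBSolution T L σ U f b g y r φ₂) :
    ∀ t ∈ Set.Icc (0 : ℝ) T, ∀ x ∈ Set.Icc (0 : ℝ) L, φ₁ t x = φ₂ t x :=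
  fun t ht x hx => le_antisymm (h₁.le hL hUc hf hb h₂ t ht x hx) (h₂.le hL hUc hf hb h₁ t ht x hx)

/-- Uniqueness of classical solutions of the HJB equation with Neumann-type
boundary conditions: two classical solutions coincide on `[0,T] × [0,L]`. -/
theorem hjb_uniqueness
    (T L σ : ℝ) (hT : 0 < T) (hL : 0 < L) (hσ : 0 < σ)
    (U : Set ℝ) (hUc : IsCompact U) (hUne : U.Nonempty)
    (f b : ℝ → ℝ → ℝ → ℝ)
    (hf : ContinuousOn (fun q : ℝ × ℝ × ℝ => f q.1 q.2.1 q.2.2)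
      (Set.Icc 0 T ×ˢ Set.Icc 0 L ×ˢ U))
    (hb : ContinuousOn (fun q : ℝ × ℝ × ℝ => b q.1 q.2.1 q.2.2)
      (Set.Icc 0 T ×ˢ Set.Icc 0 L ×ˢ U))
    (g y r : ℝ → ℝ)
    (hg : ContinuousOn g (Set.Icc 0 L))
    (hy : ContinuousOn y (Set.Icc 0 T)) (hr : ContinuousOn r (Set.Icc 0 T))
    (φ₁ φ₂ : ℝ → ℝ → ℝ)
    (h₁ : IsHJBSolution T L σ U f b g y r φ₁)
    (h₂ : IsHJBSolution T L σ U f b g y r φ₂) :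
    ∀ t ∈ Set.Icc (0 : ℝ) T, ∀ x ∈ Set.Icc (0 : ℝ) L, φ₁ t x = φ₂ t x :=
  hjb_uniqueness_general T L σ hL U hUc f b hf hb g y r φ₁ φ₂ h₁ h₂
end

section
/- Let c_m > 0 and let U = [u₀, u₁] ⊆ ℝ be a nonempty compact interval. Let φ, ψ : ℝ → ℝ be differentiable on U. Assume ψ satisfies the strong convexity inequality ψ(β) ≥ ψ(α) + (β − α) ψ'(α) + c_m (β − α)² for all α, β ∈ U. Let a ∈ U be a minimizer of φ over U and b ∈ U be a minimizer of ψ over U. Then c_m |b − a|² ≤ |b − a| · |ψ'(a) − φ'(a)|; in particular |b − a| ≤ |ψ'(a) − φ'(a)| / c_m. -/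
/-!
First-order optimality of `φ` at `a` in the direction `b - a` gives `0 ≤ (b - a) φ'(a)`, and
minimality of `ψ` at `b` together with strong convexity at `a` gives
`c_m (b - a)² ≤ ψ(b) - ψ(a) - (b - a) ψ'(a) ≤ -(b - a) ψ'(a)`. Adding the two yields
`c_m (b - a)² ≤ (a - b)(ψ'(a) - φ'(a))`.
-/

theorem IsLocalMinOn.sub_mul_hasDerivWithinAt_nonneg {s : Set ℝ} {f : ℝ → ℝ} {f' a b : ℝ}
    (h : IsLocalMinOn f s a) (hf : HasDerivWithinAt f f' s a) (hs : Convex ℝ s)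
    (ha : a ∈ s) (hb : b ∈ s) : 0 ≤ (b - a) * f' := by
  have htan : b - a ∈ posTangentConeAt s a :=
    sub_mem_posTangentConeAt_of_segment_subset (hs.segment_subset ha hb)
  simpa [mul_comm] using h.hasFDerivWithinAt_nonneg hf.hasFDerivWithinAt htan

theorem mul_sq_abs_sub_le_of_isLocalMinOn {s : Set ℝ} {φ ψ : ℝ → ℝ} {φ'a ψ'a c a b : ℝ}
    (hs : Convex ℝ s) (ha : a ∈ s) (hb : b ∈ s) (hamin : IsLocalMinOn φ s a)
    (hφ : HasDerivWithinAt φ φ'a s a) (hψ : ψ b ≤ ψ a)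
    (hconv : ψ a + (b - a) * ψ'a + c * (b - a) ^ 2 ≤ ψ b) :
    c * |b - a| ^ 2 ≤ |b - a| * |ψ'a - φ'a| := by
  have hfoc := hamin.sub_mul_hasDerivWithinAt_nonneg hφ hs ha hb
  calc c * |b - a| ^ 2 = c * (b - a) ^ 2 := by rw [sq_abs]
    _ ≤ (a - b) * (ψ'a - φ'a) := by linear_combination hconv + hψ + hfoc
    _ ≤ |(a - b) * (ψ'a - φ'a)| := le_abs_self _
    _ = |b - a| * |ψ'a - φ'a| := by rw [abs_mul, abs_sub_comm]

theorem le_div_of_mul_sq_le_mul {c x y : ℝ} (hc : 0 < c) (hx : 0 ≤ x) (hy : 0 ≤ y)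
    (h : c * x ^ 2 ≤ x * y) : x ≤ y / c := by
  rcases hx.eq_or_lt with rfl | hx
  · positivity
  · rw [le_div_iff₀ hc]
    exact le_of_mul_le_mul_left (by linarith) hx

theorem minimizer_stability_general
    (c_m u₀ u₁ : ℝ) (hcm : 0 < c_m)
    (φ ψ φ' ψ' : ℝ → ℝ)
    (hφ : ∀ u ∈ Set.Icc u₀ u₁, HasDerivWithinAt φ (φ' u) (Set.Icc u₀ u₁) u)
    (hconv : ∀ α ∈ Set.Icc u₀ u₁, ∀ β ∈ Set.Icc u₀ u₁,
      ψ α + (β - α) * ψ' α + c_m * (β - α) ^ 2 ≤ ψ β)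
    (a b : ℝ) (ha : a ∈ Set.Icc u₀ u₁) (hb : b ∈ Set.Icc u₀ u₁)
    (hamin : ∀ u ∈ Set.Icc u₀ u₁, φ a ≤ φ u)
    (hbmin : ∀ u ∈ Set.Icc u₀ u₁, ψ b ≤ ψ u) :
    c_m * |b - a| ^ 2 ≤ |b - a| * |ψ' a - φ' a| ∧
      |b - a| ≤ |ψ' a - φ' a| / c_m := by
  have key : c_m * |b - a| ^ 2 ≤ |b - a| * |ψ' a - φ' a| :=
    mul_sq_abs_sub_le_of_isLocalMinOn (convex_Icc u₀ u₁) ha hb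
      (isMinOn_iff.2 hamin).localize (hφ a ha) (hbmin a ha) (hconv a ha b hb)
  exact ⟨key, le_div_of_mul_sq_le_mul hcm (abs_nonneg _) (abs_nonneg _) key⟩

/-- Quantitative stability of minimizers over a compact interval: if `ψ` is
strongly convex on `U = [u₀,u₁]` with parameter `c_m` and `a`, `b` minimize
`φ`, `ψ` respectively over `U`, then
`c_m |b−a|² ≤ |b−a|·|ψ'(a) − φ'(a)|`, hence `|b−a| ≤ |ψ'(a) − φ'(a)|/c_m`. -/
theorem minimizer_stability
    (c_m u₀ u₁ : ℝ) (hcm : 0 < c_m) (hU : u₀ ≤ u₁)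
    (φ ψ φ' ψ' : ℝ → ℝ)
    (hφ : ∀ u ∈ Set.Icc u₀ u₁, HasDerivWithinAt φ (φ' u) (Set.Icc u₀ u₁) u)
    (hψ : ∀ u ∈ Set.Icc u₀ u₁, HasDerivWithinAt ψ (ψ' u) (Set.Icc u₀ u₁) u)
    (hconv : ∀ α ∈ Set.Icc u₀ u₁, ∀ β ∈ Set.Icc u₀ u₁,
      ψ α + (β - α) * ψ' α + c_m * (β - α) ^ 2 ≤ ψ β)
    (a b : ℝ) (ha : a ∈ Set.Icc u₀ u₁) (hb : b ∈ Set.Icc u₀ u₁)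
    (hamin : ∀ u ∈ Set.Icc u₀ u₁, φ a ≤ φ u)
    (hbmin : ∀ u ∈ Set.Icc u₀ u₁, ψ b ≤ ψ u) :
    c_m * |b - a| ^ 2 ≤ |b - a| * |ψ' a - φ' a| ∧
      |b - a| ≤ |ψ' a - φ' a| / c_m :=
  minimizer_stability_general c_m u₀ u₁ hcm φ ψ φ' ψ' hφ hconv a b ha hb hamin hbmin
end
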